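/- Let S = (R_i)_{i∈I} be a family of fuzzy relations on U, X_0 a fuzzy relation on U, x ∈ L, and k ∈ {1,2,3}. If (X_j)_{j∈J} is a family of fuzzy relations with X_j ≤ X_0 and x ≤ SD_k(S)(X_j) for every j ∈ J, then the pointwise supremum ⨆_{j∈J} X_j satisfies ⨆_{j∈J} X_j ≤ X_0 and x ≤ SD_k(S)(⨆_{j∈J} X_j); i.e., the set {X | X ≤ X_0 and x ≤ SD_k(S)(X)} is closed under arbitrary pointwise suprema. -/
import Mathlib


/-- A complete residuated lattice: a complete lattice with a commutative monoid
operation `otimes` whose unit is the top element, distributing over arbitrary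
suprema, together with its residuum `res` characterized by the adjunction. -/
class CRL (L : Type*) extends CompleteLattice L where
  /-- the multiplication ⊗ -/
  otimes : L → L → L
  otimes_comm : ∀ a b : L, otimes a b = otimes b a
  otimes_assoc : ∀ a b c : L, otimes (otimes a b) c = otimes a (otimes b c)
  otimes_top : ∀ a : L, otimes a ⊤ = a
  otimes_sSup : ∀ (a : L) (s : Set L), otimes a (sSup s) = ⨆ b ∈ s, otimes a b
  /-- the residuum → -/
  res : L → L → L
  otimes_le_iff : ∀ a b c : L, otimes a b ≤ c ↔ a ≤ res b c

variable {L : Type*} [CRL L] {U : Type*}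

/-- The biresiduum x ↔ y = (x → y) ⊓ (y → x). -/
def bres (a b : L) : L := CRL.res a b ⊓ CRL.res b a

/-- Composition of fuzzy relations: (R ∘ P)(u,v) = ⨆ w, R(u,w) ⊗ P(w,v). -/
def fcomp (R P : U → U → L) : U → U → L :=
  fun u v => ⨆ w, CRL.otimes (R u w) (P w v)

/-- Inclusion degree of fuzzy relations: R ≲ Q. -/
def incl (R Q : U → U → L) : L := ⨅ u, ⨅ v, CRL.res (R u v) (Q u v)

/-- Equality degree of fuzzy relations: R ≈ Q. -/
def eqd (R Q : U → U → L) : L := ⨅ u, ⨅ v, bres (R u v) (Q u v)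

/-- SD_1(S)(X) = ⨅ i, ((X ∘ R_i) ≲ (R_i ∘ X)). -/
def SD1 {I : Type*} (S : I → U → U → L) (X : U → U → L) : L :=
  ⨅ i, incl (fcomp X (S i)) (fcomp (S i) X)

/-- SD_2(S)(X) = ⨅ i, ((R_i ∘ X) ≲ (X ∘ R_i)). -/
def SD2 {I : Type*} (S : I → U → U → L) (X : U → U → L) : L :=
  ⨅ i, incl (fcomp (S i) X) (fcomp X (S i))

/-- SD_3(S)(X) = SD_1(S)(X) ⊓ SD_2(S)(X). -/
def SD3 {I : Type*} (S : I → U → U → L) (X : U → U → L) : L :=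
  SD1 S X ⊓ SD2 S X

section Aux
variable {L : Type*} [CRL L] {U : Type*}

lemma otimes_iSup {ι : Sort*} (a : L) (f : ι → L) :
    CRL.otimes a (⨆ i, f i) = ⨆ i, CRL.otimes a (f i) := by
  rw [iSup, CRL.otimes_sSup, iSup_range]

lemma otimes_mono_right {a b c : L} (h : b ≤ c) :
    CRL.otimes a b ≤ CRL.otimes a c := by
  have h1 : c ≤ CRL.res a (CRL.otimes a c) := by
    rw [← CRL.otimes_le_iff, CRL.otimes_comm]
  have h2 : b ≤ CRL.res a (CRL.otimes a c) := le_trans h h1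
  rw [← CRL.otimes_le_iff] at h2
  rwa [CRL.otimes_comm]

lemma fcomp_mono_right (R : U → U → L) {P Q : U → U → L} (h : P ≤ Q) :
    ∀ u v, fcomp R P u v ≤ fcomp R Q u v := fun u v =>
  iSup_mono fun w => otimes_mono_right (h w v)

lemma fcomp_mono_left {P Q : U → U → L} (R : U → U → L) (h : P ≤ Q) :
    ∀ u v, fcomp P R u v ≤ fcomp Q R u v := fun u v =>
  iSup_mono fun w => by
    rw [CRL.otimes_comm (P u w), CRL.otimes_comm (Q u w)]
    exact otimes_mono_right (h u w)

lemma key1 {J : Type*} (R : U → U → L) (x : L) (X : J → U → U → L)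
    (h : ∀ j, x ≤ incl (fcomp (X j) R) (fcomp R (X j))) :
    x ≤ incl (fcomp (⨆ j, X j) R) (fcomp R (⨆ j, X j)) := by
  refine le_iInf fun u => le_iInf fun v => ?_
  rw [← CRL.otimes_le_iff]
  have : fcomp (⨆ j, X j) R u v = ⨆ w, ⨆ j, CRL.otimes (X j u w) (R w v) := by
    unfold fcomp
    refine iSup_congr fun w => ?_
    rw [CRL.otimes_comm]
    simp only [iSup_apply]
    rw [otimes_iSup]
    exact iSup_congr fun j => CRL.otimes_comm _ _
  rw [this, otimes_iSup]
  refine iSup_le fun w => ?_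
  rw [otimes_iSup]
  refine iSup_le fun j => ?_
  have h1 : CRL.otimes (X j u w) (R w v) ≤ fcomp (X j) R u v := by unfold fcomp; exact le_iSup (fun w => CRL.otimes (X j u w) (R w v)) w
  have h2 : CRL.otimes x (fcomp (X j) R u v) ≤ fcomp R (X j) u v := by
    rw [CRL.otimes_le_iff]
    exact le_trans (h j) (le_trans (iInf_le _ u) (iInf_le _ v))
  calc CRL.otimes x (CRL.otimes (X j u w) (R w v))
      ≤ CRL.otimes x (fcomp (X j) R u v) := otimes_mono_right h1
    _ ≤ fcomp R (X j) u v := h2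
    _ ≤ fcomp R (⨆ j, X j) u v := fcomp_mono_right R (le_iSup X j) u v

lemma key2 {J : Type*} (R : U → U → L) (x : L) (X : J → U → U → L)
    (h : ∀ j, x ≤ incl (fcomp R (X j)) (fcomp (X j) R)) :
    x ≤ incl (fcomp R (⨆ j, X j)) (fcomp (⨆ j, X j) R) := by
  refine le_iInf fun u => le_iInf fun v => ?_
  rw [← CRL.otimes_le_iff]
  have : fcomp R (⨆ j, X j) u v = ⨆ w, ⨆ j, CRL.otimes (R u w) (X j w v) := by
    unfold fcomp
    refine iSup_congr fun w => ?_
    simp only [iSup_apply]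
    rw [otimes_iSup]
  rw [this, otimes_iSup]
  refine iSup_le fun w => ?_
  rw [otimes_iSup]
  refine iSup_le fun j => ?_
  have h1 : CRL.otimes (R u w) (X j w v) ≤ fcomp R (X j) u v := by unfold fcomp; exact le_iSup (fun w => CRL.otimes (R u w) (X j w v)) w
  have h2 : CRL.otimes x (fcomp R (X j) u v) ≤ fcomp (X j) R u v := by
    rw [CRL.otimes_le_iff]
    exact le_trans (h j) (le_trans (iInf_le _ u) (iInf_le _ v))
  calc CRL.otimes x (CRL.otimes (R u w) (X j w v))
      ≤ CRL.otimes x (fcomp R (X j) u v) := otimes_mono_right h1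
    _ ≤ fcomp (X j) R u v := h2
    _ ≤ fcomp (⨆ j, X j) R u v := fcomp_mono_left R (le_iSup X j) u v

end Aux

/-- For each k ∈ {1,2,3}, the set {X | X ≤ X₀ ∧ x ≤ SD_k(S)(X)} is closed under
arbitrary pointwise suprema. -/
theorem stmt3 [Nonempty U] {I J : Type*} (S : I → U → U → L) (X0 : U → U → L) (x : L)
    (X : J → U → U → L) :
    ((∀ j, X j ≤ X0 ∧ x ≤ SD1 S (X j)) → ((⨆ j, X j) ≤ X0 ∧ x ≤ SD1 S (⨆ j, X j))) ∧
    ((∀ j, X j ≤ X0 ∧ x ≤ SD2 S (X j)) → ((⨆ j, X j) ≤ X0 ∧ x ≤ SD2 S (⨆ j, X j))) ∧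
    ((∀ j, X j ≤ X0 ∧ x ≤ SD3 S (X j)) → ((⨆ j, X j) ≤ X0 ∧ x ≤ SD3 S (⨆ j, X j))) := by
  have hsd1 : (∀ j, x ≤ SD1 S (X j)) → x ≤ SD1 S (⨆ j, X j) := fun h =>
    le_iInf fun i => key1 (S i) x X fun j => le_trans (h j) (iInf_le _ i)
  have hsd2 : (∀ j, x ≤ SD2 S (X j)) → x ≤ SD2 S (⨆ j, X j) := fun h =>
    le_iInf fun i => key2 (S i) x X fun j => le_trans (h j) (iInf_le _ i)
  refine ⟨fun h => ⟨iSup_le fun j => (h j).1, hsd1 fun j => (h j).2⟩,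
    fun h => ⟨iSup_le fun j => (h j).1, hsd2 fun j => (h j).2⟩,
    fun h => ⟨iSup_le fun j => (h j).1, le_inf
      (hsd1 fun j => le_trans (h j).2 inf_le_left)
      (hsd2 fun j => le_trans (h j).2 inf_le_right)⟩⟩
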